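/- Let G be a progressive graph with a linear order ≺ on E(G) satisfying condition (P1). Then (G, ≺) is a POP-graph (i.e., ≺ also satisfies (P2)) if and only if (G, ≺) is an anchored UPO-graph (i.e., ≺ satisfies (U2), (U3) and (A)). -/

import Mathlib

variable {V E : Type}

/-- Edge reachability `e1 → e2`: a directed path of edges `f_0, …, f_k` with `k ≥ 1`,
`f_0 = e1`, `f_k = e2` and `t f_{i-1} = s f_i`. -/
def eReach (s t : E → V) : E → E → Prop :=
  Relation.TransGen (fun a b => t a = s b)

/-- Vertex reachability `v → w`: a directed path from `v` to `w` using at least one edge. -/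
def vReach (s t : E → V) : V → V → Prop :=
  Relation.TransGen (fun v w => ∃ e, s e = v ∧ t e = w)

/-- A directed graph is acyclic if no vertex reaches itself. -/
def Acyclic (s t : E → V) : Prop := ∀ v, ¬ vReach s t v v

/-- `I(v)`: incoming edges of `v`. -/
def inE (t : E → V) (v : V) : Set E := {e | t e = v}

/-- `O(v)`: outgoing edges of `v`. -/
def outE (s : E → V) (v : V) : Set E := {e | s e = v}

/-- Convex hull `X̄` of `X` in the linear order `le`: the interval `{y | X^- ≤ y ≤ X^+}`
(empty when `X` is empty). -/
def hull (le : E → E → Prop) (X : Set E) : Set E :=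
  {y | ∃ a ∈ X, ∃ b ∈ X, le a y ∧ le y b}

/-- The strict order associated to a linear order `le`. -/
def ltOf (le : E → E → Prop) (a b : E) : Prop := le a b ∧ a ≠ b

/-- A source: no incoming edges. -/
def IsSource (t : E → V) (v : V) : Prop := inE t v = ∅

/-- A sink: no outgoing edges. -/
def IsSink (s : E → V) (v : V) : Prop := outE s v = ∅

/-- A progressive graph: acyclic and every source and every sink has degree 1. -/
def Progressive (s t : E → V) : Prop :=
  Acyclic s t ∧
  ∀ v, (IsSource t v ∨ IsSink s v) → ({e | s e = v ∨ t e = v} : Set E).ncard = 1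

/-- `I(G)`: input edges, those whose source vertex is a source of `G`. -/
def inputE (s t : E → V) : Set E := {e | IsSource t (s e)}

/-- `O(G)`: output edges, those whose target vertex is a sink of `G`. -/
def outputE (s t : E → V) : Set E := {e | IsSink s (t e)}

/-- Condition (U1) = (P1): `e1 → e2` implies `e1 ≺ e2`. -/
def U1 (s t : E → V) (le : E → E → Prop) : Prop :=
  ∀ e1 e2, eReach s t e1 e2 → ltOf le e1 e2

/-- Condition (U2): for every vertex `v`, `Ī(v) ∩ Ō(v) = ∅` and `Ē(v) = Ī(v) ∪ Ō(v)`. -/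
def U2 (s t : E → V) (le : E → E → Prop) : Prop :=
  ∀ v, hull le (inE t v) ∩ hull le (outE s v) = ∅ ∧
    hull le (inE t v ∪ outE s v) = hull le (inE t v) ∪ hull le (outE s v)

/-- Condition (U3). -/
def U3 (s t : E → V) (le : E → E → Prop) : Prop :=
  ∀ v1 v2,
    ((inE t v1 ∩ hull le (inE t v2)).Nonempty →
      hull le (inE t v1) ⊆ hull le (inE t v2)) ∧
    ((outE s v1 ∩ hull le (outE s v2)).Nonempty →
      hull le (outE s v1) ⊆ hull le (outE s v2))

/-- Condition (U4): for every progressive vertex `v`, `I(G) ∩ Ō(v) = ∅` and `O(G) ∩ Ī(v) = ∅`. -/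
def U4 (s t : E → V) (le : E → E → Prop) : Prop :=
  ∀ v, ¬ IsSource t v → ¬ IsSink s v →
    inputE s t ∩ hull le (outE s v) = ∅ ∧ outputE s t ∩ hull le (inE t v) = ∅

/-- An upward planar order: a linear order on the edges satisfying (U1), (U2), (U3). -/
def IsUPO (s t : E → V) (le : E → E → Prop) : Prop :=
  IsLinearOrder E le ∧ U1 s t le ∧ U2 s t le ∧ U3 s t le

/-- Condition (P2). -/
def P2 (s t : E → V) (le : E → E → Prop) : Prop :=
  ∀ e1 e2 e3, ltOf le e1 e2 → ltOf le e2 e3 → eReach s t e1 e3 →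
    eReach s t e1 e2 ∨ eReach s t e2 e3

/-- Condition (P̃2). -/
def P2t (s t : E → V) (le : E → E → Prop) : Prop :=
  ∀ e1 e2 e3, ltOf le e1 e2 → ltOf le e2 e3 → t e1 = s e3 →
    eReach s t e1 e2 ∨ eReach s t e2 e3

/-- Condition (P3) (for distinct vertices). -/
def P3 (s t : E → V) (le : E → E → Prop) : Prop :=
  ∀ v1 v2, v1 ≠ v2 →
    ((inE t v1 ∩ hull le (inE t v2)).Nonempty → vReach s t v1 v2) ∧
    ((outE s v1 ∩ hull le (outE s v2)).Nonempty → vReach s t v2 v1)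

/-- Condition (A): for distinct `v1 v2`, `∅ ≠ Ī(v1) ⊆ Ī(v2)` implies `v1 → v2`,
and `∅ ≠ Ō(v1) ⊆ Ō(v2)` implies `v2 → v1`. -/
def CondA (s t : E → V) (le : E → E → Prop) : Prop :=
  ∀ v1 v2, v1 ≠ v2 →
    ((hull le (inE t v1)).Nonempty → hull le (inE t v1) ⊆ hull le (inE t v2) →
      vReach s t v1 v2) ∧
    ((hull le (outE s v1)).Nonempty → hull le (outE s v1) ⊆ hull le (outE s v2) →
      vReach s t v2 v1)

/-- A POP-graph: a progressive graph with a planar order ((P1) and (P2)). -/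
def IsPOP (s t : E → V) (le : E → E → Prop) : Prop :=
  Progressive s t ∧ IsLinearOrder E le ∧ U1 s t le ∧ P2 s t le

/-- `U(v) = {w | Ō(v) ⊊ Ō(w)}` when `O(v) ≠ ∅`, and `U(v) = ∅` otherwise. -/
def Uset (s : E → V) (le : E → E → Prop) (v : V) : Set V :=
  {w | (outE s v).Nonempty ∧ hull le (outE s v) ⊂ hull le (outE s w)}

/-- `D(v) = {w | Ī(v) ⊊ Ī(w)}` when `I(v) ≠ ∅`, and `D(v) = ∅` otherwise. -/
def Dset (t : E → V) (le : E → E → Prop) (v : V) : Set V :=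
  {w | (inE t v).Nonempty ∧ hull le (inE t v) ⊂ hull le (inE t w)}

/-- A CPP-extension of `G = (s, t)`: a POP-graph `(s', t', le')` with an embedding
`(φ0, φ1)` satisfying (E1)–(E4). -/
def IsCPP {V' E' : Type} (s t : E → V) (s' t' : E' → V')
    (le' : E' → E' → Prop) (φ0 : V → V') (φ1 : E → E') : Prop :=
  Function.Injective φ0 ∧ Function.Injective φ1 ∧
  (∀ e, s' (φ1 e) = φ0 (s e)) ∧ (∀ e, t' (φ1 e) = φ0 (t e)) ∧
  IsPOP s' t' le' ∧
  -- (E1)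
  Set.range φ0 = {v : V' | ¬ IsSource t' v ∧ ¬ IsSink s' v} ∧
  -- (E2)
  Nat.card E' = Nat.card E + ({v : V | IsSource t v}).ncard + ({v : V | IsSink s v}).ncard ∧
  -- (E3)
  (∀ v w, IsSource t v → IsSink s w → inE t' (φ0 v) ∩ outE s' (φ0 w) = ∅) ∧
  -- (E4)
  (∀ e' : E', e' ∉ Set.range φ1 → e' ∉ inputE s' t' → e' ∉ outputE s' t' →
    ((∃ a ∈ outE s' (s' e'), ltOf le' a e') ∧ (∃ b ∈ outE s' (s' e'), ltOf le' e' b)) ∨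
    ((∃ a ∈ inE t' (t' e'), ltOf le' a e') ∧ (∃ b ∈ inE t' (t' e'), ltOf le' e' b)))

/-! The heart of both sides is that every edge lying in the hull `Ī(v)` leads to `v` by a
(possibly empty) path, together with the mirror statement for `Ō(v)`.

Under (P2): if `a ≺ e ≼ b` with `a, b ∈ I(v)` and `t e ≠ v`, then `v` has two in-edges, so it is
not a sink and has an out-edge `g`, and `a ≺ e ≺ g` with `a → g`. Now `a → e` would give `b → e`
(paths only see the target of their first edge), against `e ≼ b`; hence `e → g`, which reaches `v`.
Under (U3) and (A): `e ∈ I(t e) ∩ Ī(v)` gives `Ī(t e) ⊆ Ī(v)`, hence `t e → v`.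

Conversely, this property gives (A) at once and (U3) by acyclicity, and together with (U2) it
gives (P̃2), the case of (P2) where `e₁, e₃` are consecutive, from which (P2) follows by
induction on the path. Statements about out-edges are reduced to those about in-edges by
reversing both the graph and the order. -/

open Relation Function

def vReachRefl (s t : E → V) : V → V → Prop :=
  ReflTransGen (fun v w => ∃ e, s e = v ∧ t e = w)

section Reachability

variable {s t : E → V}

theorem eReach_iff_vReachRefl {e f : E} : eReach s t e f ↔ vReachRefl s t (t e) (s f) := by
  constructor
  · intro h
    induction h with
    | single h => rw [h]; exact .refl
    | tail _ hgf ih => exact ih.tail ⟨_, rfl, hgf⟩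
  · intro h
    suffices ∀ w, vReachRefl s t (t e) w → ∀ f, s f = w → eReach s t e f from this _ h f rfl
    intro w hw
    induction hw with
    | refl => exact fun f hf => .single hf.symm
    | tail _ hstep ih =>
      obtain ⟨g, rfl, rfl⟩ := hstep
      exact fun f hf => (ih g rfl).tail hf.symm

theorem vReachRefl_iff_eq_or_vReach {v w : V} :
    vReachRefl s t v w ↔ w = v ∨ vReach s t v w :=
  reflTransGen_iff_eq_or_transGen

theorem Acyclic.eq_of_vReachRefl (hG : Acyclic s t) {v w : V} (hvw : vReachRefl s t v w)
    (hwv : vReachRefl s t w v) : v = w := by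
  rcases vReachRefl_iff_eq_or_vReach.1 hvw with h | h
  · exact h.symm
  · exact absurd (h.trans_left hwv) (hG v)

theorem eReach_swap {e f : E} : eReach t s e f ↔ eReach s t f e := by
  have hrel : (fun a b => s a = t b) = swap (fun a b => t a = s b) := by
    funext a b
    exact propext eq_comm
  rw [eReach, eReach, hrel, transGen_swap]

theorem vReach_swap {v w : V} : vReach t s v w ↔ vReach s t w v := by
  simp only [vReach, ← transGen_swap (r := fun v w => ∃ e, s e = v ∧ t e = w), and_comm]

theorem vReachRefl_swap {v w : V} : vReachRefl t s v w ↔ vReachRefl s t w v := by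
  simp only [vReachRefl, ← reflTransGen_swap (r := fun v w => ∃ e, s e = v ∧ t e = w), and_comm]

theorem Acyclic.swap (hG : Acyclic s t) : Acyclic t s :=
  fun v hv => hG v (vReach_swap.1 hv)

theorem Progressive.swap (hG : Progressive s t) : Progressive t s := by
  refine ⟨hG.1.swap, fun v hv => ?_⟩
  simpa only [or_comm] using hG.2 v hv.symm

theorem Progressive.outE_nonempty (hG : Progressive s t) {a b : E} {v : V} (ha : t a = v)
    (hb : t b = v) (hab : a ≠ b) : (outE s v).Nonempty := by
  by_contra h
  obtain ⟨x, hx⟩ := Set.ncard_eq_one.1 (hG.2 v (.inr (Set.not_nonempty_iff_eq_empty.1 h)))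
  have ha' : a ∈ ({x} : Set E) := hx ▸ .inr ha
  have hb' : b ∈ ({x} : Set E) := hx ▸ .inr hb
  exact hab (ha'.trans hb'.symm)

end Reachability

section Order

variable {le : E → E → Prop}

theorem not_le_of_ltOf [Std.Antisymm le] {a b : E} (h : ltOf le a b) : ¬ le b a :=
  fun h' => h.2 (antisymm_of le h.1 h')

theorem ltOf_of_le_of_ltOf [IsPartialOrder E le] {a b c : E} (hab : le a b) (hbc : ltOf le b c) :
    ltOf le a c :=
  ⟨trans_of le hab hbc.1, fun hac => not_le_of_ltOf hbc (hac ▸ hab)⟩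

theorem mem_hull_self [Std.Refl le] {X : Set E} {x : E} (hx : x ∈ X) : x ∈ hull le X :=
  ⟨x, hx, x, hx, refl_of le x, refl_of le x⟩

theorem hull_mono {X Y : Set E} (h : X ⊆ Y) : hull le X ⊆ hull le Y :=
  fun _ ⟨a, ha, b, hb, hay, hyb⟩ => ⟨a, h ha, b, h hb, hay, hyb⟩

theorem hull_swap (X : Set E) : hull (swap le) X = hull le X := by
  ext y
  constructor <;> rintro ⟨a, ha, b, hb, hay, hyb⟩ <;> exact ⟨b, hb, a, ha, hyb, hay⟩

end Order

section Conditions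

variable {s t : E → V} {le : E → E → Prop}

theorem U1.swap (hP1 : U1 s t le) : U1 t s (swap le) :=
  fun e f hef => ⟨(hP1 f e (eReach_swap.1 hef)).1, (hP1 f e (eReach_swap.1 hef)).2.symm⟩

theorem P2.swap (hP2 : P2 s t le) : P2 t s (swap le) := fun e₁ e₂ e₃ h₁₂ h₂₃ h₁₃ =>
  (hP2 e₃ e₂ e₁ ⟨h₂₃.1, h₂₃.2.symm⟩ ⟨h₁₂.1, h₁₂.2.symm⟩ (eReach_swap.1 h₁₃)).symm.imp
    eReach_swap.2 eReach_swap.2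

theorem U3.swap (hU3 : U3 s t le) : U3 t s (swap le) := fun v w => by
  simp only [hull_swap]
  exact (hU3 v w).symm

theorem CondA.swap (hA : CondA s t le) : CondA t s (swap le) := fun v w hvw => by
  simp only [hull_swap, vReach_swap]
  exact (hA v w hvw).symm

theorem U1.exists_outE_le [Std.Refl le] (hP1 : U1 s t le) {a y : E} (h : eReach s t a y) :
    ∃ f ∈ outE s (t a), le f y := by
  obtain ⟨f, haf, hfy⟩ := TransGen.head'_iff.1 h
  rcases reflTransGen_iff_eq_or_transGen.1 hfy with rfl | hfy
  · exact ⟨_, haf.symm, refl_of le _⟩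
  · exact ⟨f, haf.symm, (hP1 f y hfy).1⟩

theorem U1.exists_inE_ge [Std.Refl le] (hP1 : U1 s t le) {y b : E} (h : eReach s t y b) :
    ∃ f ∈ inE t (s b), le y f :=
  hP1.swap.exists_outE_le (eReach_swap.2 h)

theorem mem_hull_inE_or_outE [Std.Refl le] (hP1 : U1 s t le) (hP2 : P2 s t le) {v : V}
    {a b y : E} (ha : t a = v) (hb : s b = v) (hay : le a y) (hyb : le y b) :
    y ∈ hull le (inE t v) ∨ y ∈ hull le (outE s v) := by
  rcases eq_or_ne a y with rfl | hay'
  · exact .inl (mem_hull_self ha)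
  rcases eq_or_ne y b with rfl | hyb'
  · exact .inr (mem_hull_self hb)
  rcases hP2 a y b ⟨hay, hay'⟩ ⟨hyb, hyb'⟩ (.single (ha.trans hb.symm)) with hay_r | hyb_r
  · obtain ⟨f, hf, hfy⟩ := hP1.exists_outE_le hay_r
    exact .inr ⟨f, ha ▸ hf, b, hb, hfy, hyb⟩
  · obtain ⟨f, hf, hyf⟩ := hP1.exists_inE_ge hyb_r
    exact .inl ⟨a, ha, f, hb ▸ hf, hay, hyf⟩

theorem U2_of_P2 [IsPartialOrder E le] (hP1 : U1 s t le) (hP2 : P2 s t le) : U2 s t le := by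
  intro v
  have in_lt_out : ∀ a b, t a = v → s b = v → ¬ le b a := fun a b ha hb =>
    not_le_of_ltOf (hP1 a b (.single (ha.trans hb.symm)))
  refine ⟨Set.eq_empty_of_forall_notMem ?_, subset_antisymm ?_
    (Set.union_subset (hull_mono Set.subset_union_left) (hull_mono Set.subset_union_right))⟩
  · rintro y ⟨⟨-, -, b, hb, -, hyb⟩, ⟨a, ha, -, -, hay, -⟩⟩
    exact in_lt_out b a hb ha (trans_of le hay hyb)
  · rintro y ⟨a, ha | ha, b, hb | hb, hay, hyb⟩
    · exact .inl ⟨a, ha, b, hb, hay, hyb⟩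
    · exact mem_hull_inE_or_outE hP1 hP2 ha hb hay hyb
    · exact absurd (trans_of le hay hyb) (in_lt_out b a hb ha)
    · exact .inr ⟨a, ha, b, hb, hay, hyb⟩

theorem P2_of_P2t [Std.Total le] (h : P2t s t le) : P2 s t le := by
  intro e₁ e₂ e₃ h₁₂ h₂₃ h₁₃
  induction h₁₃ generalizing e₂ with
  | single h₁₃ => exact h e₁ e₂ _ h₁₂ h₂₃ h₁₃
  | @tail f e₃ h₁f hf₃ ih =>
    rcases eq_or_ne e₂ f with rfl | hne
    · exact .inr (.single hf₃)
    rcases total_of le e₂ f with hle | hle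
    · exact (ih e₂ h₁₂ ⟨hle, hne⟩).imp_right (·.tail hf₃)
    · exact (h f e₂ e₃ ⟨hle, hne.symm⟩ h₂₃ hf₃).imp_left h₁f.trans

end Conditions

def InHullReaches (s t : E → V) (le : E → E → Prop) : Prop :=
  ∀ v e, e ∈ hull le (inE t v) → vReachRefl s t (t e) v

namespace InHullReaches

variable {s t : E → V} {le : E → E → Prop}

theorem of_P2 [IsPartialOrder E le] (hG : Progressive s t) (hP1 : U1 s t le)
    (hP2 : P2 s t le) : InHullReaches s t le := by
  rintro v e ⟨a, ha, b, hb, hae, heb⟩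
  by_cases hev : t e = v
  · rw [hev]
    exact .refl
  have hae' : a ≠ e := fun h => hev (h ▸ ha)
  have heb' : e ≠ b := fun h => hev (h ▸ hb)
  obtain ⟨g, hg⟩ := hG.outE_nonempty ha hb fun h => hae' (antisymm_of le hae (h ▸ heb))
  have heg : ltOf le e g := ltOf_of_le_of_ltOf heb (hP1 b g (.single (hb.trans hg.symm)))
  rcases hP2 a e g ⟨hae, hae'⟩ heg (.single (ha.trans hg.symm)) with hae_r | heg_r
  · have hbe : eReach s t b e := by
      rw [eReach_iff_vReachRefl] at hae_r ⊢
      rwa [hb, ← ha]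
    exact absurd heb (not_le_of_ltOf (hP1 b e hbe))
  · rw [← (hg : s g = v)]
    exact eReach_iff_vReachRefl.1 heg_r

theorem of_U3_CondA [Std.Refl le] (hU3 : U3 s t le) (hA : CondA s t le) :
    InHullReaches s t le := fun v e he =>
  vReachRefl_iff_eq_or_vReach.2 <| (eq_or_ne (t e) v).imp Eq.symm fun hev =>
    (hA _ _ hev).1 ⟨e, mem_hull_self rfl⟩ ((hU3 _ _).1 ⟨e, rfl, he⟩)

theorem hull_inE_subset [IsLinearOrder E le] (hK : InHullReaches s t le) (hG : Acyclic s t)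
    {v w : V} (hvw : (inE t v ∩ hull le (inE t w)).Nonempty) :
    hull le (inE t v) ⊆ hull le (inE t w) := by
  obtain ⟨e, he, a', ha', b', hb', hae, heb⟩ := hvw
  by_cases hvw : v = w
  · exact hvw ▸ subset_rfl
  have hvw_r : vReachRefl s t v w := (he : t e = v) ▸ hK w e ⟨a', ha', b', hb', hae, heb⟩
  -- an edge of `I(w)` inside `Ī(v)` would close the cycle `v → w → v`
  have hout : ∀ x ∈ inE t w, x ∉ hull le (inE t v) := fun x hx hxv =>
    hvw (hG.eq_of_vReachRefl hvw_r ((hx : t x = w) ▸ hK v x hxv))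
  rintro y ⟨a, ha, b, hb, hay, hyb⟩
  refine ⟨a', ha', b', hb', ?_, ?_⟩
  · by_contra h
    exact hout a' ha' ⟨a, ha, e, he, trans_of le hay ((total_of le a' y).resolve_left h), hae⟩
  · by_contra h
    exact hout b' hb' ⟨e, he, b, hb, heb, trans_of le ((total_of le y b').resolve_left h) hyb⟩

theorem vReach_of_hull_inE_subset [Std.Refl le] (hK : InHullReaches s t le) {v w : V}
    (hvw : v ≠ w) (hne : (hull le (inE t v)).Nonempty)
    (hsub : hull le (inE t v) ⊆ hull le (inE t w)) : vReach s t v w := by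
  obtain ⟨-, a, ha, -⟩ := hne
  have haw := hK w a (hsub (mem_hull_self ha))
  rw [(ha : t a = v)] at haw
  exact (vReachRefl_iff_eq_or_vReach.1 haw).resolve_left hvw.symm

theorem U3 [IsLinearOrder E le] (hK : InHullReaches s t le)
    (hK' : InHullReaches t s (swap le)) (hG : Acyclic s t) : U3 s t le := fun v w =>
  ⟨hK.hull_inE_subset hG, fun hvw => by
    have h := hK'.hull_inE_subset hG.swap (by rwa [hull_swap])
    simp only [hull_swap] at h
    exact h⟩

theorem CondA [Std.Refl le] (hK : InHullReaches s t le) (hK' : InHullReaches t s (swap le)) :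
    CondA s t le := fun v w hvw =>
  ⟨hK.vReach_of_hull_inE_subset hvw, fun hne hsub => vReach_swap.1 <|
    hK'.vReach_of_hull_inE_subset hvw (by rwa [hull_swap]) (by simp only [hull_swap]; exact hsub)⟩

theorem P2t (hK : InHullReaches s t le) (hK' : InHullReaches t s (swap le)) (hU2 : U2 s t le) :
    P2t s t le := by
  intro e₁ e₂ e₃ h₁₂ h₂₃ h₁₃
  have he₂ : e₂ ∈ hull le (inE t (t e₁) ∪ outE s (t e₁)) :=
    ⟨e₁, .inl rfl, e₃, .inr h₁₃.symm, h₁₂.1, h₂₃.1⟩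
  rw [(hU2 (t e₁)).2] at he₂
  rcases he₂ with hin | hout
  · right
    rw [eReach_iff_vReachRefl, ← h₁₃]
    exact hK _ _ hin
  · left
    rw [eReach_iff_vReachRefl, ← vReachRefl_swap]
    exact hK' _ _ (by rwa [hull_swap])

end InHullReaches

theorem P2_iff_anchored_UPO_general {V E : Type}
    (s t : E → V) (le : E → E → Prop) (hlin : IsLinearOrder E le)
    (hprog : Progressive s t) (hP1 : U1 s t le) :
    P2 s t le ↔ (U2 s t le ∧ U3 s t le ∧ CondA s t le) := by
  have := hlin
  constructor
  · intro hP2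
    have hK := InHullReaches.of_P2 hprog hP1 hP2
    have hK' := InHullReaches.of_P2 hprog.swap hP1.swap hP2.swap
    exact ⟨U2_of_P2 hP1 hP2, hK.U3 hK' hprog.1, hK.CondA hK'⟩
  · rintro ⟨hU2, hU3, hA⟩
    have hK := InHullReaches.of_U3_CondA hU3 hA
    have hK' := InHullReaches.of_U3_CondA hU3.swap hA.swap
    exact P2_of_P2t (hK.P2t hK' hU2)

/-- for a progressive graph with (P1): (P2) ↔ ((U2), (U3) and (A)),
i.e. being a POP-graph is equivalent to being an anchored UPO-graph. -/
theorem P2_iff_anchored_UPO {V E : Type} [Fintype V] [Fintype E]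
    (s t : E → V) (le : E → E → Prop) (hlin : IsLinearOrder E le)
    (hprog : Progressive s t) (hP1 : U1 s t le) :
    P2 s t le ↔ (U2 s t le ∧ U3 s t le ∧ CondA s t le) :=
  P2_iff_anchored_UPO_general s t le hlin hprog hP1
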